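/- arXiv:1208.0695 — 4 statements merged into one kernel-verified Lean document; each statement's English description precedes it below -/
import Mathlib

section
/- For the back-and-forth dealing of ℓs cards to ℓ players with s even (the round sequence is 1,2,...,ℓ,ℓ,...,2,1 repeated s/2 times), Z(j,i) = 0 for all pairs of players i ≠ j. -/
open Finset

/-- Signed pair count of a dealing method: `Z(j,i)` is the number of positions of
player `j` before positions of player `i`, minus the reverse. Positions are `1,…,n`. -/
def Zdeal (n : ℕ) (f : ℕ → ℕ) (j i : ℕ) : ℤ :=
  (((Finset.Icc 1 n ×ˢ Finset.Icc 1 n).filter fun pq =>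
      pq.1 < pq.2 ∧ f pq.1 = j ∧ f pq.2 = i).card : ℤ)
  - (((Finset.Icc 1 n ×ˢ Finset.Icc 1 n).filter fun pq =>
      pq.1 < pq.2 ∧ f pq.1 = i ∧ f pq.2 = j).card : ℤ)

/-- The back-and-forth dealing with `ℓ` players: odd rounds deal in order `1,…,ℓ`,
even rounds in order `ℓ,…,1`. Positions are `1,…,ℓs`. -/
def backForth (ℓ : ℕ) (t : ℕ) : ℕ :=
  if ((t - 1) / ℓ) % 2 = 0 then (t - 1) % ℓ + 1 else ℓ - (t - 1) % ℓ

/-- `backForth` in terms of the offset within a double round of `2ℓ` positions. -/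
lemma bf_offset (ℓ b m : ℕ) (hm : m < 2*ℓ) :
    backForth ℓ (2*ℓ*b + m + 1) = if m < ℓ then m + 1 else 2*ℓ - m := by
  have hl : 0 < ℓ := by omega
  unfold backForth
  have h1 : 2*ℓ*b + m + 1 - 1 = ℓ*(2*b) + m := by ring_nf; omega
  rw [h1]
  rcases lt_or_ge m ℓ with h | h
  · have hd : (ℓ*(2*b) + m) / ℓ = 2*b := by
      rw [Nat.mul_add_div hl, Nat.div_eq_of_lt h]; omega
    have hm' : (ℓ*(2*b) + m) % ℓ = m := by
      rw [Nat.mul_add_mod, Nat.mod_eq_of_lt h]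
    rw [hd, hm']
    have h2 : (2*b) % 2 = 0 := by omega
    rw [if_pos h2, if_pos h]
  · have h2 : ℓ*(2*b) + m = ℓ*(2*b+1) + (m - ℓ) := by
      have : ℓ*(2*b+1) = ℓ*(2*b) + ℓ := by ring
      omega
    rw [h2]
    have hd : (ℓ*(2*b+1) + (m-ℓ)) / ℓ = 2*b+1 := by
      rw [Nat.mul_add_div hl, Nat.div_eq_of_lt (by omega)]
    have hm' : (ℓ*(2*b+1) + (m-ℓ)) % ℓ = m - ℓ := by
      rw [Nat.mul_add_mod, Nat.mod_eq_of_lt (by omega)]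
    rw [hd, hm']
    have h3 : (2*b+1) % 2 = 1 := by omega
    rw [h3, if_neg one_ne_zero, if_neg (by omega)]
    omega

/-- `backForth` is invariant under reflecting the offset within a double round. -/
lemma bf_reflect (ℓ b m : ℕ) (hm : m < 2*ℓ) :
    backForth ℓ (2*ℓ*b + (2*ℓ - 1 - m) + 1) = backForth ℓ (2*ℓ*b + m + 1) := by
  rw [bf_offset _ _ _ (by omega), bf_offset _ _ _ hm]
  split_ifs <;> omega

/-- `backForth` only depends on the offset within a double round. -/
lemma bf_block_irrel (ℓ b b' m : ℕ) (hm : m < 2*ℓ) :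
    backForth ℓ (2*ℓ*b + m + 1) = backForth ℓ (2*ℓ*b' + m + 1) := by
  rw [bf_offset _ _ _ hm, bf_offset _ _ _ hm]

/-- The involution on pairs of positions used in the bijection proof: inside the same
double round of `2ℓ` positions, reflect both positions (and swap them); across
different double rounds, exchange the offsets while keeping the double rounds. -/
def emap (L : ℕ) (pq : ℕ × ℕ) : ℕ × ℕ :=
  if (pq.1 - 1)/L = (pq.2 - 1)/L then
    (L*((pq.2-1)/L) + (L - 1 - (pq.2-1)%L) + 1, L*((pq.1-1)/L) + (L - 1 - (pq.1-1)%L) + 1)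
  else
    (L*((pq.1-1)/L) + (pq.2-1)%L + 1, L*((pq.2-1)/L) + (pq.1-1)%L + 1)

lemma decomp_div (L b o : ℕ) (hL : 0 < L) (ho : o < L) :
    (L*b+o+1-1)/L = b ∧ (L*b+o+1-1)%L = o := by
  have h1 : L*b+o+1-1 = L*b+o := by omega
  rw [h1]
  constructor
  · rw [Nat.mul_add_div hL, Nat.div_eq_of_lt ho]; omega
  · rw [Nat.mul_add_mod, Nat.mod_eq_of_lt ho]

lemma mem_Icc_of_decomp (L b o N : ℕ) (hb : b < N) (ho : o < L) :
    L*b+o+1 ∈ Icc 1 (L*N) := by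
  have h1 : L*(b+1) ≤ L*N := Nat.mul_le_mul_left L hb
  have h2 : L*(b+1) = L*b + L := by ring
  simp only [mem_Icc]
  omega

lemma emap_spec (ℓ N : ℕ) (hl : 0 < ℓ) (p q : ℕ)
    (hp : p ∈ Icc 1 (2*ℓ*N)) (hq : q ∈ Icc 1 (2*ℓ*N)) (hpq : p < q) :
    (emap (2*ℓ) (p,q)).1 ∈ Icc 1 (2*ℓ*N) ∧ (emap (2*ℓ) (p,q)).2 ∈ Icc 1 (2*ℓ*N) ∧
    (emap (2*ℓ) (p,q)).1 < (emap (2*ℓ) (p,q)).2 ∧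
    backForth ℓ (emap (2*ℓ) (p,q)).1 = backForth ℓ q ∧
    backForth ℓ (emap (2*ℓ) (p,q)).2 = backForth ℓ p ∧
    emap (2*ℓ) (emap (2*ℓ) (p,q)) = (p,q) := by
  set L := 2*ℓ with hLdef
  have hL : 0 < L := by omega
  simp only [mem_Icc] at hp hq
  set bp := (p-1)/L with hbp
  set op := (p-1)%L with hop
  set bq := (q-1)/L with hbq
  set oq := (q-1)%L with hoq
  have hpd : L*bp + op = p - 1 := Nat.div_add_mod (p-1) L
  have hqd : L*bq + oq = q - 1 := Nat.div_add_mod (q-1) L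
  have hp1 : p = L*bp + op + 1 := by omega
  have hq1 : q = L*bq + oq + 1 := by omega
  have hopL : op < L := Nat.mod_lt _ hL
  have hoqL : oq < L := Nat.mod_lt _ hL
  have hbpN : bp < N := by
    apply Nat.div_lt_of_lt_mul; omega
  have hbqN : bq < N := by
    apply Nat.div_lt_of_lt_mul; omega
  have hble : bp ≤ bq := by
    by_contra h
    push_neg at h
    have : L*(bq+1) ≤ L*bp := Nat.mul_le_mul_left L h
    have h2 : L*(bq+1) = L*bq + L := by ring
    omega
  by_cases hb : bp = bq
  · -- same double round: reflect both positions and swap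
    have hoo : op < oq := by
      rw [hb] at hp1; omega
    have he : emap L (p,q) = (L*bq + (L-1-oq) + 1, L*bp + (L-1-op) + 1) := by
      simp only [emap, hp1, hq1]
      rw [if_pos]
      · rw [(decomp_div L bp op hL hopL).1, (decomp_div L bp op hL hopL).2,
           (decomp_div L bq oq hL hoqL).1, (decomp_div L bq oq hL hoqL).2]
      · rw [(decomp_div L bp op hL hopL).1, (decomp_div L bq oq hL hoqL).1]; exact hb
    rw [he]
    refine ⟨mem_Icc_of_decomp L bq _ N hbqN (by omega),
           mem_Icc_of_decomp L bp _ N hbpN (by omega), by rw [hb]; omega, ?_, ?_, ?_⟩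
    · rw [hq1, hLdef]; exact bf_reflect ℓ bq oq hoqL
    · rw [hp1, hLdef]; exact bf_reflect ℓ bp op hopL
    · simp only [emap]
      rw [(decomp_div L bq (L-1-oq) hL (by omega)).1, (decomp_div L bq (L-1-oq) hL (by omega)).2,
          (decomp_div L bp (L-1-op) hL (by omega)).1, (decomp_div L bp (L-1-op) hL (by omega)).2]
      rw [if_pos hb.symm]
      have e1 : L - 1 - (L-1-op) = op := by omega
      have e2 : L - 1 - (L-1-oq) = oq := by omega
      rw [e1, e2, Prod.mk.injEq]
      constructor <;> omega
  · -- different double rounds: exchange offsets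
    have hblt : bp < bq := by omega
    have hLL : L*(bp+1) ≤ L*bq := Nat.mul_le_mul_left L hblt
    have hLL2 : L*(bp+1) = L*bp + L := by ring
    have he : emap L (p,q) = (L*bp + oq + 1, L*bq + op + 1) := by
      simp only [emap, hp1, hq1]
      rw [(decomp_div L bp op hL hopL).1, (decomp_div L bp op hL hopL).2,
          (decomp_div L bq oq hL hoqL).1, (decomp_div L bq oq hL hoqL).2]
      rw [if_neg hb]
    rw [he]
    refine ⟨mem_Icc_of_decomp L bp _ N hbpN hoqL,
           mem_Icc_of_decomp L bq _ N hbqN hopL, by omega, ?_, ?_, ?_⟩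
    · rw [hq1, hLdef]; exact bf_block_irrel ℓ bp bq oq hoqL
    · rw [hp1, hLdef]; exact bf_block_irrel ℓ bq bp op hopL
    · simp only [emap]
      rw [(decomp_div L bp oq hL hoqL).1, (decomp_div L bp oq hL hoqL).2,
          (decomp_div L bq op hL hopL).1, (decomp_div L bq op hL hopL).2]
      rw [if_neg hb, Prod.mk.injEq]
      constructor <;> omega

/-- For the back-and-forth dealing with an even number `s` of rounds,
`Z(j,i) = 0` for all pairs of players `i ≠ j`. -/
theorem Zdeal_backForth_even (ℓ s : ℕ) (hs : Even s) (i j : ℕ)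
    (hi : i ∈ Icc 1 ℓ) (hj : j ∈ Icc 1 ℓ) (hij : i ≠ j) :
    Zdeal (ℓ * s) (backForth ℓ) j i = 0 := by
  simp only [mem_Icc] at hi hj
  have hl : 0 < ℓ := by omega
  obtain ⟨N, rfl⟩ := hs
  have hn : ℓ * (N + N) = 2 * ℓ * N := by ring
  unfold Zdeal
  rw [hn, sub_eq_zero]
  norm_cast
  have key : ∀ x y : ℕ, ∀ pq ∈ ((Icc 1 (2*ℓ*N) ×ˢ Icc 1 (2*ℓ*N)).filter fun pq =>
      pq.1 < pq.2 ∧ backForth ℓ pq.1 = x ∧ backForth ℓ pq.2 = y),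
      emap (2*ℓ) pq ∈ ((Icc 1 (2*ℓ*N) ×ˢ Icc 1 (2*ℓ*N)).filter fun pq =>
      pq.1 < pq.2 ∧ backForth ℓ pq.1 = y ∧ backForth ℓ pq.2 = x) ∧
      emap (2*ℓ) (emap (2*ℓ) pq) = pq := by
    rintro x y ⟨p, q⟩ hpq
    simp only [mem_filter, mem_product] at hpq
    obtain ⟨⟨hp, hq⟩, hlt, hfp, hfq⟩ := hpq
    obtain ⟨m1, m2, mlt, f1, f2, inv⟩ := emap_spec ℓ N hl p q hp hq hlt
    refine ⟨?_, inv⟩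
    simp only [mem_filter, mem_product]
    exact ⟨⟨m1, m2⟩, mlt, by rw [f1, hfq], by rw [f2, hfp]⟩
  exact card_nbij' (emap (2*ℓ)) (emap (2*ℓ))
    (fun a ha => (key j i a ha).1) (fun a ha => (key i j a ha).1)
    (fun a ha => (key j i a ha).2) (fun a ha => (key i j a ha).2)
end

section
/- For the back-and-forth dealing of ℓs cards to ℓ players with s odd, Z(j,i) = 1 when j < i and Z(j,i) = -1 when j > i. -/
open Finset

/-!
Player `j` receives exactly one card in each round `r < s`, at position `backForthPos ℓ j r` in
the `r`-th block of `ℓ` positions. Two cards from different rounds are ordered by their rounds,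
so these pairs contribute equally to both counts in `Zdeal`. Within a round, `j < i` comes first
exactly in the even rounds (counted from `0`), so `Z(j,i)` is the number of even rounds minus the
number of odd ones, which is `1` when `s` is odd.
-/

/-- The position of player `j`'s card in round `r`, rounds being counted from `0`. -/
def backForthPos (ℓ j r : ℕ) : ℕ := r * ℓ + if r % 2 = 0 then j else ℓ + 1 - j

lemma Zdeal_swap (n : ℕ) (f : ℕ → ℕ) (i j : ℕ) : Zdeal n f i j = -Zdeal n f j i :=
  (neg_sub _ _).symm

lemma card_filter_lt_or_eq_and {α : Type*} [LinearOrder α] (s : Finset α) (P : α → Prop)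
    [DecidablePred P] :
    #{x ∈ s ×ˢ s | x.1 < x.2 ∨ x.1 = x.2 ∧ P x.1} =
      #{x ∈ s ×ˢ s | x.1 < x.2} + #{a ∈ s | P a} := by
  have hdisj : Disjoint {x ∈ s ×ˢ s | x.1 < x.2} {x ∈ s ×ˢ s | x.1 = x.2 ∧ P x.1} :=
    disjoint_filter.2 fun x _ hlt heq => hlt.ne heq.1
  rw [filter_or, card_union_of_disjoint hdisj]
  congr 1
  refine card_nbij' Prod.fst (fun a => (a, a)) ?_ ?_ ?_ ?_
  · rintro ⟨a, b⟩ h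
    simp only [coe_filter, mem_product, Set.mem_ofPred_eq] at h ⊢
    obtain ⟨⟨ha, -⟩, rfl, hP⟩ := h
    exact ⟨ha, hP⟩
  · intro a h
    simp_all
  · rintro ⟨a, b⟩ h
    simp_all
  · intro a _
    rfl

lemma card_even_sub_card_odd (n : ℕ) :
    (#{r ∈ range n | r % 2 = 0} : ℤ) - #{r ∈ range n | r % 2 = 1} = (n % 2 : ℕ) := by
  induction n with
  | zero => simp
  | succ n ih =>
    rw [range_add_one, filter_insert, filter_insert]
    rcases Nat.mod_two_eq_zero_or_one n with h | h <;> grind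

section backForth

variable {ℓ a b i j r r' s t : ℕ}

lemma backForthPos_mem_block (hj : j ∈ Icc 1 ℓ) (r : ℕ) :
    r * ℓ < backForthPos ℓ j r ∧ backForthPos ℓ j r ≤ (r + 1) * ℓ := by
  rw [mem_Icc] at hj
  rw [Nat.succ_mul]
  unfold backForthPos
  split <;> omega

lemma backForthPos_sub_one_div (hj : j ∈ Icc 1 ℓ) (r : ℕ) :
    (backForthPos ℓ j r - 1) / ℓ = r := by
  obtain ⟨hlo, hhi⟩ := backForthPos_mem_block hj r
  exact Nat.div_eq_of_lt_le (by omega) (by omega)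

lemma backForth_backForthPos (hj : j ∈ Icc 1 ℓ) (r : ℕ) :
    backForth ℓ (backForthPos ℓ j r) = j := by
  have hdiv := backForthPos_sub_one_div hj r
  have hmod := Nat.div_add_mod (backForthPos ℓ j r - 1) ℓ
  rw [hdiv, mul_comm] at hmod
  rw [mem_Icc] at hj
  unfold backForth
  rw [hdiv]
  unfold backForthPos at hmod ⊢
  split_ifs at hmod ⊢ <;> omega

lemma backForthPos_backForth (ht : 1 ≤ t) :
    backForthPos ℓ (backForth ℓ t) ((t - 1) / ℓ) = t := by
  have hmod := Nat.div_add_mod (t - 1) ℓ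
  rw [mul_comm] at hmod
  rcases Nat.eq_zero_or_pos ℓ with rfl | hℓ
  · simp [backForth, backForthPos]; omega
  · have := Nat.mod_lt (t - 1) hℓ
    unfold backForth backForthPos
    split_ifs <;> omega

lemma backForthPos_mem_Icc (hj : j ∈ Icc 1 ℓ) (hr : r < s) :
    backForthPos ℓ j r ∈ Icc 1 (ℓ * s) := by
  obtain ⟨hlo, hhi⟩ := backForthPos_mem_block hj r
  have : (r + 1) * ℓ ≤ ℓ * s := by rw [mul_comm ℓ]; exact Nat.mul_le_mul_right ℓ hr
  rw [mem_Icc]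
  omega

lemma sub_one_div_lt_of_mem_Icc (ht : t ∈ Icc 1 (ℓ * s)) : (t - 1) / ℓ < s := by
  rw [mem_Icc] at ht
  rw [Nat.div_lt_iff_lt_mul (Nat.pos_of_mul_pos_right (by omega : 0 < ℓ * s)), mul_comm]
  omega

lemma backForthPos_lt_of_lt (ha : a ∈ Icc 1 ℓ) (hb : b ∈ Icc 1 ℓ) (h : r < r') :
    backForthPos ℓ a r < backForthPos ℓ b r' :=
  calc backForthPos ℓ a r ≤ (r + 1) * ℓ := (backForthPos_mem_block ha r).2
    _ ≤ r' * ℓ := Nat.mul_le_mul_right ℓ h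
    _ < backForthPos ℓ b r' := (backForthPos_mem_block hb r').1

lemma backForthPos_lt_iff (ha : a ∈ Icc 1 ℓ) (hb : b ∈ Icc 1 ℓ) :
    backForthPos ℓ a r < backForthPos ℓ b r' ↔
      r < r' ∨ r = r' ∧ backForthPos ℓ a r < backForthPos ℓ b r := by
  constructor
  · intro h
    rcases lt_trichotomy r r' with hlt | rfl | hgt
    · exact .inl hlt
    · exact .inr ⟨rfl, h⟩
    · exact absurd (backForthPos_lt_of_lt hb ha hgt) h.asymm
  · rintro (hlt | ⟨rfl, h⟩)
    · exact backForthPos_lt_of_lt ha hb hlt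
    · exact h

lemma card_backForth_pairs (ha : a ∈ Icc 1 ℓ) (hb : b ∈ Icc 1 ℓ) (s : ℕ) :
    #{pq ∈ Icc 1 (ℓ * s) ×ˢ Icc 1 (ℓ * s) |
        pq.1 < pq.2 ∧ backForth ℓ pq.1 = a ∧ backForth ℓ pq.2 = b}
      = #{rr ∈ range s ×ˢ range s | backForthPos ℓ a rr.1 < backForthPos ℓ b rr.2} := by
  refine card_nbij' (fun pq => ((pq.1 - 1) / ℓ, (pq.2 - 1) / ℓ))
    (fun rr => (backForthPos ℓ a rr.1, backForthPos ℓ b rr.2)) ?_ ?_ ?_ ?_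
  · rintro ⟨p, q⟩ h
    simp only [coe_filter, mem_product, Set.mem_ofPred_eq, mem_range] at h ⊢
    obtain ⟨⟨hp, hq⟩, hpq, rfl, rfl⟩ := h
    refine ⟨⟨sub_one_div_lt_of_mem_Icc hp, sub_one_div_lt_of_mem_Icc hq⟩, ?_⟩
    rwa [backForthPos_backForth (mem_Icc.1 hp).1, backForthPos_backForth (mem_Icc.1 hq).1]
  · rintro ⟨r, r'⟩ h
    simp only [coe_filter, mem_product, Set.mem_ofPred_eq, mem_range] at h ⊢
    exact ⟨⟨backForthPos_mem_Icc ha h.1.1, backForthPos_mem_Icc hb h.1.2⟩, h.2,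
      backForth_backForthPos ha r, backForth_backForthPos hb r'⟩
  · rintro ⟨p, q⟩ h
    simp only [coe_filter, mem_product, Set.mem_ofPred_eq] at h
    obtain ⟨⟨hp, hq⟩, -, rfl, rfl⟩ := h
    simp only [backForthPos_backForth (mem_Icc.1 hp).1, backForthPos_backForth (mem_Icc.1 hq).1]
  · rintro ⟨r, r'⟩ -
    simp only [backForthPos_sub_one_div ha, backForthPos_sub_one_div hb]

lemma Zdeal_backForth (hi : i ∈ Icc 1 ℓ) (hj : j ∈ Icc 1 ℓ) (s : ℕ) :
    Zdeal (ℓ * s) (backForth ℓ) j i =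
      (#{r ∈ range s | backForthPos ℓ j r < backForthPos ℓ i r} : ℤ)
        - #{r ∈ range s | backForthPos ℓ i r < backForthPos ℓ j r} := by
  unfold Zdeal
  rw [card_backForth_pairs hj hi, card_backForth_pairs hi hj,
    filter_congr fun rr _ => backForthPos_lt_iff hj hi,
    filter_congr fun rr _ => backForthPos_lt_iff hi hj,
    card_filter_lt_or_eq_and _ fun r => backForthPos ℓ j r < backForthPos ℓ i r,
    card_filter_lt_or_eq_and _ fun r => backForthPos ℓ i r < backForthPos ℓ j r]
  push_cast
  ring

lemma backForthPos_lt_backForthPos_iff_even (hab : a < b) (hb : b ≤ ℓ) (r : ℕ) :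
    backForthPos ℓ a r < backForthPos ℓ b r ↔ r % 2 = 0 := by
  unfold backForthPos
  split <;> omega

lemma backForthPos_lt_backForthPos_iff_odd (hab : a < b) (hb : b ≤ ℓ) (r : ℕ) :
    backForthPos ℓ b r < backForthPos ℓ a r ↔ r % 2 = 1 := by
  unfold backForthPos
  split <;> omega

lemma Zdeal_backForth_of_lt (hs : Odd s) (hi : i ∈ Icc 1 ℓ) (hj : j ∈ Icc 1 ℓ)
    (hji : j < i) :
    Zdeal (ℓ * s) (backForth ℓ) j i = 1 := by
  rw [Zdeal_backForth hi hj,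
    filter_congr fun r _ => backForthPos_lt_backForthPos_iff_even hji (mem_Icc.1 hi).2 r,
    filter_congr fun r _ => backForthPos_lt_backForthPos_iff_odd hji (mem_Icc.1 hi).2 r,
    card_even_sub_card_odd, Nat.odd_iff.1 hs, Nat.cast_one]

end backForth

/-- For the back-and-forth dealing with an odd number `s` of rounds,
`Z(j,i) = 1` when `j < i` and `Z(j,i) = -1` when `j > i`. -/
theorem Zdeal_backForth_odd (ℓ s : ℕ) (hs : Odd s) (i j : ℕ)
    (hi : i ∈ Icc 1 ℓ) (hj : j ∈ Icc 1 ℓ) (hij : i ≠ j) :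
    Zdeal (ℓ * s) (backForth ℓ) j i = if j < i then (1 : ℤ) else -1 := by
  rcases hij.lt_or_gt with hlt | hgt
  · rw [if_neg hlt.not_gt, Zdeal_swap, Zdeal_backForth_of_lt hs hj hi hlt]
  · rw [if_pos hgt, Zdeal_backForth_of_lt hs hi hj hgt]
end

section
/- If the dealing sequence f of length n satisfies f(n+1-t) = f(t) for all t, then Z(j,i) = 0 for all players i ≠ j. -/
open Finset

/-- If the dealing sequence is palindromic, `f(n+1-t) = f(t)` for all positions `t`,
then `Z(j,i) = 0` for all players `i ≠ j`. -/
theorem Zdeal_palindrome (n : ℕ) (f : ℕ → ℕ)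
    (hpal : ∀ t ∈ Icc 1 n, f (n + 1 - t) = f t) :
    ∀ i j : ℕ, i ≠ j → Zdeal n f j i = 0 := by
  intro i j _
  unfold Zdeal
  rw [sub_eq_zero]
  norm_cast
  apply Finset.card_bij (fun pq _ => (n + 1 - pq.2, n + 1 - pq.1))
  · rintro ⟨p, q⟩ h
    simp only [mem_filter, mem_product, mem_Icc] at h ⊢
    obtain ⟨⟨⟨hp1, hpn⟩, ⟨hq1, hqn⟩⟩, hpq, hfp, hfq⟩ := h
    have hmemp : p ∈ Icc 1 n := mem_Icc.mpr ⟨hp1, hpn⟩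
    have hmemq : q ∈ Icc 1 n := mem_Icc.mpr ⟨hq1, hqn⟩
    refine ⟨⟨⟨?_, ?_⟩, ?_, ?_⟩, ?_, ?_, ?_⟩
    · omega
    · omega
    · omega
    · omega
    · omega
    · rw [hpal q hmemq]; exact hfq
    · rw [hpal p hmemp]; exact hfp
  · rintro ⟨p, q⟩ hp ⟨p', q'⟩ hq h
    simp only [mem_filter, mem_product, mem_Icc] at hp hq
    simp only [Prod.mk.injEq, Prod.ext_iff] at h ⊢
    omega
  · rintro ⟨p, q⟩ h
    refine ⟨(n + 1 - q, n + 1 - p), ?_, ?_⟩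
    · simp only [mem_filter, mem_product, mem_Icc] at h ⊢
      obtain ⟨⟨⟨hp1, hpn⟩, ⟨hq1, hqn⟩⟩, hpq, hfp, hfq⟩ := h
      have hmemp : (n + 1 - p) ∈ Icc 1 n := mem_Icc.mpr (by omega)
      have hmemq : (n + 1 - q) ∈ Icc 1 n := mem_Icc.mpr (by omega)
      refine ⟨⟨?_, ?_⟩, ?_, ?_, ?_⟩
      · omega
      · omega
      · omega
      · rw [hpal q (mem_Icc.mpr ⟨hq1, hqn⟩)]; exact hfq
      · rw [hpal p (mem_Icc.mpr ⟨hp1, hpn⟩)]; exact hfp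
    · simp only [mem_filter, mem_product, mem_Icc] at h
      simp only [Prod.ext_iff]
      exact ⟨by omega, by omega⟩
end

section
/- For two colors (black/red) and a deck of n cards with b black cards dealt into ℓ hands of size s (n = ℓs), given a hand ω = (b_1,...,b_ℓ) with Σ b_j = b and 0 ≤ b_j ≤ s, the sum of Z(D',B,R) over all arrangements D' realizing hand ω under dealing method f equals ∏_{j=1}^{ℓ} C(s, b_j) · Σ_{i=1}^{ℓ} b_i (n + 1 - (2/s) Σ_{t=1}^{s} i_t), where i_t is the t-th position of player i. -/
/-!
Black–black pairs contribute `+1 - 1 = 0` to `Z`, so `Z(D)` is the sum over black positions `p`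
(1-indexed) of `#(later cards) - #(earlier cards) = n + 1 - 2p`. Summed over the arrangements
realising the hand, this is `∑_p (n + 1 - 2p) · N_p`, where `N_p` counts the arrangements with
`p` black. Swapping two cards of the same player permutes these arrangements, so `N_p` is
constant on each player's positions; double counting the black cards of player `i` then gives
`s · N_p = b_i · #arrangements`, and `#arrangements = ∏_j C(s, b_j)`.
-/

open Finset

open scoped Classical

/-- Signed count of black-red pairs minus red-black pairs for a two-coloured deck
(`true` = black, `false` = red). -/
def Zbool {n : ℕ} (D : Fin n → Bool) : ℤ :=
  ((univ.filter fun p : Fin n × Fin n =>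
      p.1 < p.2 ∧ D p.1 = true ∧ D p.2 = false).card : ℤ)
  - ((univ.filter fun p : Fin n × Fin n =>
      p.1 < p.2 ∧ D p.1 = false ∧ D p.2 = true).card : ℤ)

theorem Fin.sum_sum_ite_lt_sub {R : Type*} [CommRing R] {n : ℕ} (x : Fin n → R) :
    ∑ p, ∑ q, (if p < q then x p - x q else 0) = ∑ t, x t * ((n : R) + 1 - 2 * ((t : ℕ) + 1)) := by
  have hlater (p : Fin n) : ∑ q, (if p < q then x p else 0) = #(Ioi p) * x p := by
    rw [← sum_filter, filter_lt_eq_Ioi, Finset.sum_const, nsmul_eq_mul]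
  have hearlier (q : Fin n) : ∑ p, (if p < q then x q else 0) = #(Iio q) * x q := by
    rw [← sum_filter, filter_gt_eq_Iio, Finset.sum_const, nsmul_eq_mul]
  have hcount (t : Fin n) : (#(Ioi t) : R) - #(Iio t) = (n : R) + 1 - 2 * ((t : ℕ) + 1) := by
    rw [Fin.card_Ioi, Fin.card_Iio, Nat.sub_sub, Nat.cast_sub (by omega)]
    push_cast
    ring
  calc ∑ p, ∑ q, (if p < q then x p - x q else 0)
      = ∑ p, ∑ q, (if p < q then x p else 0) - ∑ p, ∑ q, (if p < q then x q else 0) := by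
        simp only [← sum_sub_distrib]
        exact sum_congr rfl fun p _ => sum_congr rfl fun q _ => by split_ifs <;> simp
    _ = ∑ t, x t * ((n : R) + 1 - 2 * ((t : ℕ) + 1)) := by
        rw [sum_comm (f := fun p q => if p < q then x q else 0)]
        simp only [hlater, hearlier, ← sum_sub_distrib, ← hcount]
        exact sum_congr rfl fun t _ => by ring

theorem Zbool_eq_sum {n : ℕ} (D : Fin n → Bool) :
    Zbool D = ∑ t, if D t then (n : ℤ) + 1 - 2 * ((t : ℕ) + 1) else 0 := by
  have hpair (p q : Fin n) :
      ((if p < q ∧ D p = true ∧ D q = false then 1 else 0) : ℤ)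
        - (if p < q ∧ D p = false ∧ D q = true then 1 else 0)
      = if p < q then (if D p then 1 else 0) - (if D q then 1 else 0) else 0 := by
    by_cases h : p < q <;> cases D p <;> cases D q <;> simp [h]
  rw [Zbool, card_filter, card_filter, Fintype.sum_prod_type, Fintype.sum_prod_type]
  push_cast
  simp only [← sum_sub_distrib, hpair, Fin.sum_sum_ite_lt_sub, ite_mul, one_mul, zero_mul]

theorem sum_Zbool_eq_sum_mul_card_filter {R : Type*} [CommRing R] {n : ℕ} (H : Finset (Fin n → Bool)) :
    ∑ D ∈ H, (Zbool D : R) = ∑ t : Fin n, ((n : R) + 1 - 2 * ((t : ℕ) + 1)) * #{D ∈ H | D t} := by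
  simp only [Zbool_eq_sum]
  push_cast
  rw [sum_comm]
  refine sum_congr rfl fun t _ => ?_
  rw [← sum_filter, Finset.sum_const, nsmul_eq_mul, mul_comm]

section Hands

variable {α ι : Type*} [Fintype α] [DecidableEq α] [DecidableEq ι]
  (f : α → ι) (J : Finset ι) (b : ι → ℕ)

def handSet : Finset (α → Bool) := {D | ∀ j ∈ J, #{t | D t = true ∧ f t = j} = b j}

variable {f J b}

theorem mem_handSet {D : α → Bool} :
    D ∈ handSet f J b ↔ ∀ j ∈ J, #{t | D t = true ∧ f t = j} = b j := by
  simp [handSet]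

theorem card_handSet (hf : ∀ t, f t ∈ J) :
    #(handSet f J b) = ∏ j ∈ J, (#{t | f t = j}).choose (b j) := by
  have hblack (S : ∀ j ∈ J, Finset α) (hS : S ∈ J.pi fun j => powersetCard (b j) {t | f t = j})
      (j : ι) (hj : j ∈ J) : ({t | t ∈ S (f t) (hf t) ∧ f t = j} : Finset α) = S j hj := by
    ext t
    simp only [mem_filter, mem_univ, true_and]
    constructor
    · rintro ⟨ht, rfl⟩
      exact ht
    · intro ht
      obtain rfl : f t = j := by simpa using (mem_powersetCard.1 (mem_pi.1 hS j hj)).1 ht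
      exact ⟨ht, rfl⟩
  calc #(handSet f J b) = #(J.pi fun j => powersetCard (b j) {t | f t = j}) := by
        refine card_nbij' (fun D j _ => {t | D t = true ∧ f t = j})
          (fun S t => decide (t ∈ S (f t) (hf t))) ?_ ?_ ?_ ?_
        · intro D hD
          rw [mem_coe, mem_handSet] at hD
          simp only [mem_coe, mem_pi, mem_powersetCard]
          exact fun j hj => ⟨fun t ht => by simp_all, hD j hj⟩
        · intro S hS
          rw [mem_coe] at hS
          simp only [mem_coe, mem_handSet, decide_eq_true_eq]
          intro j hj
          rw [hblack S hS j hj]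
          exact (mem_powersetCard.1 (mem_pi.1 hS j hj)).2
        · intro D _
          funext t
          simp
        · intro S hS
          funext j hj
          simpa using hblack S hS j hj
    _ = ∏ j ∈ J, (#{t | f t = j}).choose (b j) := by simp

theorem comp_mem_handSet_iff {D : α → Bool} {σ : Equiv.Perm α} (hσ : ∀ t, f (σ t) = f t) :
    D ∘ σ ∈ handSet f J b ↔ D ∈ handSet f J b := by
  have hcard (j : ι) : #{t | D (σ t) = true ∧ f t = j} = #{t | D t = true ∧ f t = j} :=
    card_equiv σ fun t => by simp [hσ]
  simp only [mem_handSet, Function.comp_apply, hcard]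

theorem card_filter_handSet_apply_eq_of_eq {t t' : α} (h : f t = f t') :
    #{D ∈ handSet f J b | D t} = #{D ∈ handSet f J b | D t'} := by
  have hswap : ∀ u, f (Equiv.swap t t' u) = f u := by
    intro u
    rcases eq_or_ne u t with rfl | hut
    · simp [h]
    rcases eq_or_ne u t' with rfl | hut'
    · simp [h]
    · rw [Equiv.swap_apply_of_ne_of_ne hut hut']
  refine card_nbij' (· ∘ Equiv.swap t t') (· ∘ Equiv.swap t t') (fun D hD => ?_) (fun D hD => ?_)
    (fun D _ => ?_) (fun D _ => ?_)
  · simp_all [comp_mem_handSet_iff hswap]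
  · simp_all [comp_mem_handSet_iff hswap]
  · ext; simp
  · ext; simp

theorem sum_card_filter_handSet_apply {j : ι} (hj : j ∈ J) :
    ∑ t ∈ {t | f t = j}, #{D ∈ handSet f J b | D t} = b j * #(handSet f J b) := by
  rw [mul_comm, ← smul_eq_mul, ← Finset.sum_const]
  refine (sum_card_bipartiteAbove_eq_sum_card_bipartiteBelow (r := fun t D => D t = true)).trans
    (sum_congr rfl fun (D : α → Bool) hD => ?_)
  rw [← mem_handSet.1 hD j hj, bipartiteBelow, filter_filter]
  simp only [and_comm]

theorem card_fiber_mul_card_filter_handSet_apply {t : α} (ht : f t ∈ J) :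
    #{u | f u = f t} * #{D ∈ handSet f J b | D t} = b (f t) * #(handSet f J b) := by
  rw [← sum_card_filter_handSet_apply ht, ← smul_eq_mul, ← Finset.sum_const]
  exact sum_congr rfl fun u hu => card_filter_handSet_apply_eq_of_eq (mem_filter.1 hu).2.symm

end Hands

theorem sum_Z_over_hand_general (ℓ s : ℕ) (hs : 1 ≤ s) (f : Fin (ℓ * s) → ℕ)
    (hran : ∀ t, f t ∈ Icc 1 ℓ)
    (hfib : ∀ j ∈ Icc 1 ℓ, (univ.filter fun t => f t = j).card = s)
    (b : ℕ → ℕ) :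
    (∑ D' ∈ univ.filter (fun D' : Fin (ℓ * s) → Bool =>
        ∀ j ∈ Icc 1 ℓ, (univ.filter fun t => D' t = true ∧ f t = j).card = b j),
      (Zbool D' : ℚ))
      = (∏ j ∈ Icc 1 ℓ, (Nat.choose s (b j) : ℚ))
        * ∑ i ∈ Icc 1 ℓ, (b i : ℚ) *
            ((ℓ : ℚ) * s + 1
              - (2 / (s : ℚ)) * ∑ t ∈ univ.filter (fun t => f t = i), ((t : ℕ) + 1 : ℚ)) := by
  simp only [← mem_handSet, filter_univ_mem]
  set H := handSet f (Icc 1 ℓ) b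
  have hs₀ : (s : ℚ) ≠ 0 := Nat.cast_ne_zero.2 (Nat.one_le_iff_ne_zero.1 hs)
  have hcard : (#H : ℚ) = ∏ j ∈ Icc 1 ℓ, (s.choose (b j) : ℚ) := by
    rw [card_handSet hran, Nat.cast_prod]
    exact prod_congr rfl fun j hj => by rw [hfib j hj]
  have hblack (t : Fin (ℓ * s)) : (#{D ∈ H | D t} : ℚ) = b (f t) * #H / s := by
    have h := card_fiber_mul_card_filter_handSet_apply (b := b) (hran t)
    rw [hfib _ (hran t)] at h
    rw [eq_div_iff hs₀, mul_comm]
    exact_mod_cast h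
  rw [sum_Zbool_eq_sum_mul_card_filter, ← sum_fiberwise_of_maps_to (fun t _ => hran t), ← hcard, mul_sum]
  refine sum_congr rfl fun i hi => ?_
  rw [sum_congr rfl fun t ht => by rw [hblack t, (mem_filter.1 ht).2], ← sum_mul, sum_sub_distrib,
    Finset.sum_const, hfib i hi, ← mul_sum]
  push_cast
  field_simp
  ring

/-- Two-colour specialization of the main proposition: for a dealing method `f` of
`n = ℓs` cards with fibers of size `s` and a hand `b = (b_1,…,b_ℓ)` with `b_j ≤ s`,
the sum of `Z(D',B,R)` over all arrangements `D'` realizing the hand `b` equals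
`∏_j C(s, b_j) · Σ_i b_i (n + 1 - (2/s)Σ_t i_t)`. Positions are 1-indexed via `t+1`. -/
theorem sum_Z_over_hand (ℓ s : ℕ) (hs : 1 ≤ s) (f : Fin (ℓ * s) → ℕ)
    (hran : ∀ t, f t ∈ Icc 1 ℓ)
    (hfib : ∀ j ∈ Icc 1 ℓ, (univ.filter fun t => f t = j).card = s)
    (b : ℕ → ℕ) (hb : ∀ j ∈ Icc 1 ℓ, b j ≤ s) :
    (∑ D' ∈ univ.filter (fun D' : Fin (ℓ * s) → Bool =>
        ∀ j ∈ Icc 1 ℓ, (univ.filter fun t => D' t = true ∧ f t = j).card = b j),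
      (Zbool D' : ℚ))
      = (∏ j ∈ Icc 1 ℓ, (Nat.choose s (b j) : ℚ))
        * ∑ i ∈ Icc 1 ℓ, (b i : ℚ) *
            ((ℓ : ℚ) * s + 1
              - (2 / (s : ℚ)) * ∑ t ∈ univ.filter (fun t => f t = i), ((t : ℕ) + 1 : ℚ)) :=
  sum_Z_over_hand_general ℓ s hs f hran hfib b
end
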